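/- Let α be irrational. Then the Sós permutations β_α are quasirandom: for every ε > 0 there exists N such that for all n ≥ N, D(β_α) ≤ ε·n, where β_α is regarded as a permutation of Z_n via the identification of [n] = {1,…,n} with Z_n. -/

import Mathlib

open Finset

/-- An interval of `ZMod n`: the projection of a set of consecutive integers. -/
def IsInterval {n : ℕ} (I : Finset (ZMod n)) : Prop :=
  ∃ a len : ℕ, I = (Finset.range len).image (fun i : ℕ => ((a + i : ℕ) : ZMod n))

/-- An initial interval of `ZMod n`: the projection of `{0, 1, …, M}` for some `M ≥ 0`. -/
def IsInitialInterval {n : ℕ} (I : Finset (ZMod n)) : Prop :=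
  ∃ M : ℕ, I = (Finset.range (M + 1)).image (fun i : ℕ => ((i : ℕ) : ZMod n))

/-- The discrepancy of `S` in `T`: `| |S ∩ T| - |S||T|/n |`. -/
noncomputable def discIn {n : ℕ} (S T : Finset (ZMod n)) : ℝ :=
  |((S ∩ T).card : ℝ) - (S.card : ℝ) * (T.card : ℝ) / (n : ℝ)|

/-- The discrepancy `D(σ)` of a permutation of `ZMod n`: the max of `D_J(σ(I))`
over all intervals `I`, `J` of `ZMod n`. -/
noncomputable def disc {n : ℕ} (σ : Equiv.Perm (ZMod n)) : ℝ :=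
  sSup {d : ℝ | ∃ I J : Finset (ZMod n), IsInterval I ∧ IsInterval J ∧ d = discIn (I.image σ) J}

/-- The discrepancy `D*(σ)`: the max of `D_J(σ(I))` over all initial intervals `I`, `J`. -/
noncomputable def discStar {n : ℕ} (σ : Equiv.Perm (ZMod n)) : ℝ :=
  sSup {d : ℝ | ∃ I J : Finset (ZMod n),
    IsInitialInterval I ∧ IsInitialInterval J ∧ d = discIn (I.image σ) J}

/-- `e(x) = exp(2πix)`. -/
noncomputable def e (x : ℝ) : ℂ := Complex.exp (2 * Real.pi * Complex.I * x)

/-- The multiplication permutation `ψ_k : s ↦ k·s` of `ZMod n`, for a unit `k`. -/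
def psi {n : ℕ} (k : (ZMod n)ˣ) : Equiv.Perm (ZMod n) where
  toFun s := (k : ZMod n) * s
  invFun s := ((k⁻¹ : (ZMod n)ˣ) : ZMod n) * s
  left_inv s := Units.inv_mul_cancel_left k s
  right_inv s := Units.mul_inv_cancel_left k s

/-- The Sós permutation value: `β_α(t) = |{s ∈ [n] : {αs} ≤ {αt}}|`. -/
noncomputable def sos (α : ℝ) (n t : ℕ) : ℕ :=
  (@Finset.filter ℕ (fun s => Int.fract (α * s) ≤ Int.fract (α * t))
    (Classical.decPred _) (Finset.Icc 1 n)).card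

/-- `A_s(α) = { {αx} : x ∈ [s] }`. -/
noncomputable def fracSet (α : ℝ) (s : ℕ) : Finset ℝ :=
  (Finset.Icc 1 s).image (fun x : ℕ => Int.fract (α * x))

/-- `d*(A) = sup_{0 ≤ x ≤ 1} | |A ∩ [0,x]| - x|A| |` for a finite set `A` of reals. -/
noncomputable def dstarSet (A : Finset ℝ) : ℝ :=
  ⨆ x : Set.Icc (0 : ℝ) 1,
    |(((@Finset.filter ℝ (fun a => a ∈ Set.Icc (0 : ℝ) (x : ℝ))
        (Classical.decPred _) A).card : ℝ)) - (x : ℝ) * (A.card : ℝ)|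

/-- Iterated Gauss map: `gaussIter α 0 = α`, `gaussIter α (i+1) = 1/{gaussIter α i}`.
For irrational `α`, the partial quotients of the continued fraction `α = [a₀; a₁, a₂, …]`
are given by `aᵢ = ⌊gaussIter α i⌋`. -/
noncomputable def gaussIter (α : ℝ) : ℕ → ℝ
  | 0 => α
  | n + 1 => 1 / Int.fract (gaussIter α n)

/-- Auxiliary for continuants (operating on the reversed list):
`contRev [] = 1`, `contRev [a] = a`, `contRev (a :: b :: l) = a * contRev (b :: l) + contRev l`. -/
def contRev : List ℕ → ℕ
  | [] => 1
  | [a] => a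
  | a :: b :: l => a * contRev (b :: l) + contRev l

/-- The continuant `K(a₁,…,a_m)`: `K() = 1`, `K(a₁) = a₁`,
`K(a₁,…,a_j) = a_j·K(a₁,…,a_{j−1}) + K(a₁,…,a_{j−2})`. -/
def continuant (l : List ℕ) : ℕ := contRev l.reverse

/-- `B_σ(k) = |{1 ≤ q ≤ k : σ(q) ≤ σ(k)}|` for a permutation `σ` of `[n]`
(realized as `Fin n`, zero-indexed). -/
def Bperm (n : ℕ) (σ : Equiv.Perm (Fin n)) (k : Fin n) : ℕ :=
  (Finset.univ.filter (fun q : Fin n => q ≤ k ∧ σ q ≤ σ k)).card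

/-- `B_α(k) = |{1 ≤ q ≤ k : {qα} ≤ {kα}}|`. -/
noncomputable def Bfrac (α : ℝ) (k : ℕ) : ℕ :=
  (@Finset.filter ℕ (fun q => Int.fract (α * q) ≤ Int.fract (α * k))
    (Classical.decPred _) (Finset.Icc 1 k)).card


private lemma fract_eq_imp (α : ℝ) (hα : Irrational α) {s t : ℕ}
    (h : Int.fract (α * s) = Int.fract (α * t)) : s = t := by
  by_contra hne
  have h1 : Int.fract (α * s) = α * s - ⌊α * s⌋ := rfl
  have h2 : Int.fract (α * t) = α * t - ⌊α * t⌋ := rfl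
  have hc : ((s : ℝ)) - t ≠ 0 := by
    intro h0
    exact hne (by exact_mod_cast sub_eq_zero.mp h0)
  have hα' : α = ((⌊α * s⌋ : ℝ) - ⌊α * t⌋) / ((s : ℝ) - t) := by
    rw [eq_div_iff hc]; nlinarith [h1 ▸ h2 ▸ h]
  have : α = (((⌊α * s⌋ - ⌊α * t⌋ : ℤ) : ℚ) / ((s : ℚ) - t) : ℚ) := by
    push_cast; exact hα'
  exact hα ⟨_, this.symm⟩

private lemma fract_pos (α : ℝ) (hα : Irrational α) {t : ℕ} (ht : 1 ≤ t) :
    0 < Int.fract (α * t) := by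
  rcases lt_or_eq_of_le (Int.fract_nonneg (α * t)) with h | h
  · exact h
  · exfalso
    have h1 : Int.fract (α * t) = α * t - ⌊α * t⌋ := rfl
    have ht0 : ((t : ℝ)) ≠ 0 := by positivity
    have : α = (((⌊α * t⌋ : ℤ) : ℚ) / (t : ℚ) : ℚ) := by
      push_cast
      rw [eq_div_iff ht0]
      nlinarith [h ▸ h1]
    exact hα ⟨_, this.symm⟩

private lemma fract_lt_shift {y h l : ℝ} (h0 : 0 ≤ h) (h1 : h < 1)
    (hy : Int.fract y < l) : Int.fract (y + h) < l + h := by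
  have hb := Int.fract_nonneg y
  have hb1 := Int.fract_lt_one y
  have hl : 0 < l := lt_of_le_of_lt hb hy
  have hc : Int.fract (y + h) = Int.fract (Int.fract y + h) := by
    conv_lhs => rw [← Int.floor_add_fract y, add_assoc, Int.fract_intCast_add]
  rw [hc]
  rcases lt_or_ge (Int.fract y + h) 1 with hlt | hge
  · rw [Int.fract_eq_self.mpr ⟨by positivity, hlt⟩]; linarith
  · have he : Int.fract (Int.fract y + h) = Int.fract y + h - 1 :=
      Int.fract_eq_iff.mpr ⟨by linarith, by linarith, ⟨1, by push_cast; ring⟩⟩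
    rw [he]; linarith

private lemma card_filter_reindex {q : ℕ} (g : ℕ → ℕ) (hmem : ∀ m < q, g m < q)
    (hinj : ∀ m₁, m₁ < q → ∀ m₂, m₂ < q → g m₁ = g m₂ → m₁ = m₂)
    (P : ℕ → Prop) [DecidablePred P] :
    ((range q).filter (fun m => P (g m))).card = ((range q).filter P).card := by
  have hinj' : Set.InjOn g (range q) := fun x hx y hy h =>
    hinj x (mem_range.mp hx) y (mem_range.mp hy) h
  have himg : (range q).image g = range q := by
    apply Finset.eq_of_subset_of_card_le
    · intro x hx
      obtain ⟨m, hm, rfl⟩ := Finset.mem_image.mp hx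
      exact mem_range.mpr (hmem m (mem_range.mp hm))
    · rw [Finset.card_image_of_injOn hinj', card_range]
  calc ((range q).filter (fun m => P (g m))).card
      = (((range q).filter (fun m => P (g m))).image g).card :=
        (Finset.card_image_of_injOn (hinj'.mono (filter_subset _ _))).symm
    _ = (((range q).image g).filter P).card := by rw [Finset.filter_image]
    _ = ((range q).filter P).card := by rw [himg]

private lemma grid_count (q : ℕ) (hq : 1 ≤ q) (θ l : ℝ) :
    (0 ≤ l → (((range q).filter (fun m : ℕ => Int.fract (θ + m / q) < l)).card : ℝ) ≤ q * l + 1)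
    ∧ (l ≤ 1 → q * l - 1 ≤ (((range q).filter (fun m : ℕ => Int.fract (θ + m / q) < l)).card : ℝ)) := by
  classical
  have hq0 : (0:ℝ) < q := by exact_mod_cast hq
  have hqZ : (0:ℤ) < q := by exact_mod_cast hq
  set φ : ℝ := q * θ with hφdef
  set k : ℤ := ⌊φ⌋ with hkdef
  set ψ : ℝ := Int.fract φ with hψdef
  have hψ0 : 0 ≤ ψ := Int.fract_nonneg φ
  have hψ1 : ψ < 1 := Int.fract_lt_one φ
  have hφ : φ = k + ψ := (Int.floor_add_fract φ).symm
  have hθ : θ = ((k : ℝ) + ψ) / q := by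
    rw [← hφ, hφdef]; field_simp
  have key : ∀ m : ℕ, m < q →
      (Int.fract (θ + m / q) < l ↔ ((((k + m) % q).toNat : ℕ) : ℝ) < q * l - ψ) := by
    intro m hm
    set j : ℤ := (k + m) % q with hjdef
    set d : ℤ := (k + m) / q with hddef
    have hj0 : 0 ≤ j := Int.emod_nonneg _ (ne_of_gt hqZ)
    have hjq : j < q := Int.emod_lt_of_pos _ hqZ
    have hdj : (k + m) = q * d + j := (Int.mul_ediv_add_emod _ _).symm
    have hc : ((k:ℝ) + m) = (q:ℝ) * d + j := by exact_mod_cast hdj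
    have harg : θ + m / q = (d : ℝ) + ((j : ℝ) + ψ) / q := by
      rw [hθ]; field_simp; linarith
    have hx0 : 0 ≤ ((j:ℝ) + ψ) / q := by positivity
    have hx1 : ((j:ℝ) + ψ) / q < 1 := by
      rw [div_lt_one hq0]
      have : (j:ℝ) ≤ (q:ℝ) - 1 := by
        have h' : j ≤ (q:ℤ) - 1 := by omega
        exact_mod_cast h'
      linarith
    have hfr : Int.fract (θ + m / q) = ((j:ℝ) + ψ) / q := by
      rw [harg, add_comm, Int.fract_add_intCast, Int.fract_eq_self.mpr ⟨hx0, hx1⟩]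
    rw [hfr, div_lt_iff₀ hq0]
    have hcast : ((j.toNat : ℕ) : ℝ) = (j : ℝ) := by
      exact_mod_cast congrArg (Int.cast : ℤ → ℝ) (Int.toNat_of_nonneg hj0)
    rw [hcast]
    constructor <;> intro h <;> nlinarith
  have hcount : ((range q).filter (fun m : ℕ => Int.fract (θ + m / q) < l)).card
      = ((range q).filter (fun j : ℕ => (j : ℝ) < q * l - ψ)).card := by
    rw [Finset.filter_congr (fun m hm => (key m (mem_range.mp hm)))]
    exact card_filter_reindex (fun m => ((k + m) % q).toNat)
      (fun m hm => by
        show ((k + (m:ℤ)) % q).toNat < q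
        have h1 : 0 ≤ (k + (m:ℤ)) % q := Int.emod_nonneg _ (ne_of_gt hqZ)
        have h2 : (k + (m:ℤ)) % q < q := Int.emod_lt_of_pos _ hqZ
        omega)
      (fun m₁ hm₁ m₂ hm₂ heq => by
        have heq2 : ((k + (m₁:ℤ)) % q).toNat = ((k + (m₂:ℤ)) % q).toNat := heq
        have h1 : 0 ≤ (k + (m₁:ℤ)) % q := Int.emod_nonneg _ (ne_of_gt hqZ)
        have h1' : 0 ≤ (k + (m₂:ℤ)) % q := Int.emod_nonneg _ (ne_of_gt hqZ)
        have heq' : (k + (m₁:ℤ)) % q = (k + (m₂:ℤ)) % q := by omega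
        have hmod : (m₁ : ℤ) % q = (m₂ : ℤ) % q := by
          have := Int.ModEq.add_left_cancel' k heq'
          exact this
        rw [Int.emod_eq_of_lt (by positivity) (by exact_mod_cast hm₁),
            Int.emod_eq_of_lt (by positivity) (by exact_mod_cast hm₂)] at hmod
        exact_mod_cast hmod)
      (fun j : ℕ => (j : ℝ) < q * l - ψ)
  rw [hcount]
  set x : ℝ := q * l - ψ with hxdef
  constructor
  · intro hl
    have hsub : (range q).filter (fun j : ℕ => (j : ℝ) < x) ⊆ range (⌊q * l⌋.toNat + 1) := by
      intro j hj
      simp only [mem_filter, mem_range] at hj ⊢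
      have h2 : (j:ℝ) < q * l := by
        have := hj.2; rw [hxdef] at this; linarith
      have h3 : (j:ℤ) ≤ ⌊q * l⌋ := Int.le_floor.mpr (by exact_mod_cast h2.le)
      omega
    have h4 : (0:ℤ) ≤ ⌊q * l⌋ := Int.floor_nonneg.mpr (by positivity)
    have h5 := Finset.card_le_card hsub
    rw [card_range] at h5
    have h6 : ((⌊q * l⌋.toNat + 1 : ℕ) : ℝ) ≤ q * l + 1 := by
      have hc2 : ((⌊q * l⌋.toNat : ℕ) : ℝ) = ((⌊q * l⌋ : ℤ) : ℝ) := by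
        exact_mod_cast congrArg (Int.cast : ℤ → ℝ) (Int.toNat_of_nonneg h4)
      push_cast
      rw [hc2]
      linarith [Int.floor_le (q * l)]
    calc ((((range q).filter (fun j : ℕ => (j : ℝ) < x)).card : ℕ) : ℝ)
        ≤ ((⌊q * l⌋.toNat + 1 : ℕ) : ℝ) := by exact_mod_cast h5
      _ ≤ q * l + 1 := h6
  · intro hl1
    by_cases hx : x ≤ 0
    · have : q * l - 1 < 0 := by rw [hxdef] at hx; linarith
      have : (0:ℝ) ≤ (((range q).filter (fun j : ℕ => (j : ℝ) < x)).card : ℝ) := Nat.cast_nonneg _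
      linarith
    · push_neg at hx
      have hcx : (0:ℤ) ≤ ⌈x⌉ := Int.ceil_nonneg hx.le
      set M : ℕ := min q (⌈x⌉.toNat) with hMdef
      have hsub : range M ⊆ (range q).filter (fun j : ℕ => (j : ℝ) < x) := by
        intro j hj
        rw [mem_range] at hj
        have hjq : j < q := lt_of_lt_of_le hj (min_le_left _ _)
        have hjc : j < ⌈x⌉.toNat := lt_of_lt_of_le hj (min_le_right _ _)
        refine mem_filter.mpr ⟨mem_range.mpr hjq, ?_⟩
        have h7 : (j:ℤ) ≤ ⌈x⌉ - 1 := by omega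
        have h8 : (j:ℝ) ≤ (⌈x⌉:ℝ) - 1 := by exact_mod_cast h7
        linarith [Int.ceil_lt_add_one x]
      have h9 := Finset.card_le_card hsub
      rw [card_range] at h9
      have h10 : (M : ℝ) ≤ (((range q).filter (fun j : ℕ => (j : ℝ) < x)).card : ℝ) := by
        exact_mod_cast h9
      have h11 : q * l - 1 ≤ (M : ℝ) := by
        rcases min_cases q (⌈x⌉.toNat) with ⟨hmeq, hle⟩ | ⟨hmeq, hlt⟩
        · rw [hMdef, hmeq]
          nlinarith
        · rw [hMdef, hmeq]
          have : ((⌈x⌉.toNat : ℕ) : ℝ) = (⌈x⌉ : ℝ) := by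
            exact_mod_cast congrArg (Int.cast : ℤ → ℝ) (Int.toNat_of_nonneg hcx)
          rw [this]
          have := Int.le_ceil x
          rw [hxdef] at this
          linarith [Int.le_ceil x]
      linarith
private lemma block_count (q : ℕ) (hq : 3 ≤ q) (p : ℤ) (hcop : Int.gcd p q = 1)
    (δ : ℝ) (hδ : |δ| ≤ 1 / q ^ 2) (β l : ℝ) (h0 : 0 ≤ l) (h1 : l ≤ 1) :
    |(((range q).filter
        (fun r : ℕ => Int.fract (β + r * ((p : ℝ) / q) + r * δ) < l)).card : ℝ) - q * l| ≤ 3 := by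
  classical
  have hq1 : 1 ≤ q := by omega
  have hq0 : (0:ℝ) < q := by exact_mod_cast hq1
  have hqZ : (0:ℤ) < q := by exact_mod_cast hq1
  set g : ℕ → ℕ := fun r => ((r * p) % q).toNat with hgdef
  have hgmem : ∀ r, r < q → g r < q := by
    intro r hr
    have h1' : 0 ≤ ((r:ℤ) * p) % q := Int.emod_nonneg _ (ne_of_gt hqZ)
    have h2 : ((r:ℤ) * p) % q < q := Int.emod_lt_of_pos _ hqZ
    show (((r:ℤ) * p) % q).toNat < q
    omega
  have hginj : ∀ r₁, r₁ < q → ∀ r₂, r₂ < q → g r₁ = g r₂ → r₁ = r₂ := by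
    intro r₁ hr₁ r₂ hr₂ heq
    have heq2 : (((r₁:ℤ) * p) % q).toNat = (((r₂:ℤ) * p) % q).toNat := heq
    have h1' : 0 ≤ ((r₁:ℤ) * p) % q := Int.emod_nonneg _ (ne_of_gt hqZ)
    have h1'' : 0 ≤ ((r₂:ℤ) * p) % q := Int.emod_nonneg _ (ne_of_gt hqZ)
    have heq' : ((r₁ : ℤ) * p) % q = ((r₂ : ℤ) * p) % q := by omega
    have hdvd : (q : ℤ) ∣ ((r₁ : ℤ) - r₂) * p := by
      rcases Int.ModEq.dvd (heq' : (r₁ : ℤ) * p ≡ (r₂ : ℤ) * p [ZMOD (q:ℤ)]) with ⟨c, hc⟩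
      exact ⟨-c, by linarith [hc]⟩
    have hcop' : IsCoprime (q : ℤ) p := by
      rw [Int.isCoprime_iff_gcd_eq_one, Int.gcd_comm]; exact hcop
    rcases hcop'.dvd_of_dvd_mul_right hdvd with ⟨c, hc⟩
    have hb1 : ((r₁ : ℤ) - r₂) < q := by omega
    have hb2 : -(q:ℤ) < ((r₁ : ℤ) - r₂) := by omega
    have hc0 : c = 0 := by
      by_contra hc0
      rcases lt_or_gt_of_ne hc0 with h | h
      · nlinarith
      · nlinarith
    rw [hc0, mul_zero] at hc
    omega
  have hpt : ∀ r : ℕ, β + r * ((p : ℝ) / q) + r * δ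
      = (β + (g r : ℝ) / q + r * δ) + (((r:ℤ) * p) / q : ℤ) := by
    intro r
    have hdj : (r : ℤ) * p = q * (((r:ℤ) * p) / q) + ((r:ℤ) * p) % q := (Int.mul_ediv_add_emod _ _).symm
    have h1' : 0 ≤ ((r:ℤ) * p) % q := Int.emod_nonneg _ (ne_of_gt hqZ)
    have hgr : ((g r : ℕ) : ℝ) = ((((r:ℤ) * p) % q : ℤ) : ℝ) := by
      exact_mod_cast congrArg (Int.cast : ℤ → ℝ) (Int.toNat_of_nonneg h1')
    have hc : ((r : ℝ)) * p = q * ((((r:ℤ) * p) / q : ℤ) : ℝ) + ((((r:ℤ) * p) % q : ℤ) : ℝ) := by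
      exact_mod_cast hdj
    rw [hgr]
    field_simp
    linarith
  have hrδ : ∀ r : ℕ, r < q → |(r:ℝ) * δ| ≤ 1 / q := by
    intro r hr
    rw [abs_mul, abs_of_nonneg (by positivity : (0:ℝ) ≤ (r:ℝ))]
    have hr' : (r : ℝ) ≤ q := by exact_mod_cast hr.le
    calc (r : ℝ) * |δ| ≤ q * (1 / q^2) := by
          apply mul_le_mul hr' hδ (abs_nonneg _) hq0.le
      _ = 1 / q := by field_simp
  have h2q : 2 / (q:ℝ) < 1 := by
    rw [div_lt_one hq0]
    have : (3:ℝ) ≤ q := by exact_mod_cast hq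
    linarith
  have h2q0 : 0 < 2 / (q:ℝ) := by positivity
  have h12 : 2/(q:ℝ) = 1/q + 1/q := by ring
  have hupper : (((range q).filter
      (fun r : ℕ => Int.fract (β + r * ((p : ℝ) / q) + r * δ) < l)).card : ℝ) ≤ q * l + 3 := by
    have hsub : (range q).filter (fun r : ℕ => Int.fract (β + r * ((p : ℝ) / q) + r * δ) < l)
        ⊆ (range q).filter (fun r : ℕ => Int.fract ((β + 1/q) + (g r : ℝ) / q) < l + 2/q) := by
      intro r hr
      rw [mem_filter] at hr ⊢
      refine ⟨hr.1, ?_⟩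
      have hrq := mem_range.mp hr.1
      have habs' := abs_le.mp (hrδ r hrq)
      have hfr : Int.fract (β + r * ((p : ℝ) / q) + r * δ)
          = Int.fract (β + (g r : ℝ) / q + r * δ) := by
        rw [hpt r, Int.fract_add_intCast]
      have hcond : Int.fract (β + (g r : ℝ) / q + r * δ) < l := hfr ▸ hr.2
      have hstep := fract_lt_shift (h := 1/q - r * δ) (by linarith)
        (by linarith) hcond
      have harg : (β + (g r:ℝ)/q + r*δ) + (1/q - r*δ) = (β + 1/q) + (g r:ℝ)/q := by ring
      rw [harg] at hstep
      linarith
    have hcard := Finset.card_le_card hsub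
    have hre : ((range q).filter
        (fun r : ℕ => Int.fract ((β + 1/q) + (g r : ℝ) / q) < l + 2/q)).card
        = ((range q).filter (fun m : ℕ => Int.fract ((β + 1/q) + (m : ℝ) / q) < l + 2/q)).card :=
      card_filter_reindex g hgmem hginj (fun m : ℕ => Int.fract ((β + 1/q) + (m : ℝ) / q) < l + 2/q)
    have hgrid := (grid_count q hq1 (β + 1/q) (l + 2/q)).1 (by positivity)
    have heq3 : (q:ℝ) * (l + 2/q) + 1 = q * l + 3 := by field_simp; ring
    calc (((range q).filter
        (fun r : ℕ => Int.fract (β + r * ((p : ℝ) / q) + r * δ) < l)).card : ℝ)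
        ≤ (((range q).filter
          (fun r : ℕ => Int.fract ((β + 1/q) + (g r : ℝ) / q) < l + 2/q)).card : ℝ) := by
          exact_mod_cast hcard
      _ = (((range q).filter
          (fun m : ℕ => Int.fract ((β + 1/q) + (m : ℝ) / q) < l + 2/q)).card : ℝ) := by
          exact_mod_cast hre
      _ ≤ q * (l + 2/q) + 1 := hgrid
      _ = q * l + 3 := heq3
  have hlower : q * l - 3 ≤ (((range q).filter
      (fun r : ℕ => Int.fract (β + r * ((p : ℝ) / q) + r * δ) < l)).card : ℝ) := by
    have hsub : (range q).filter (fun r : ℕ => Int.fract ((β - 1/q) + (g r : ℝ) / q) < l - 2/q)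
        ⊆ (range q).filter (fun r : ℕ => Int.fract (β + r * ((p : ℝ) / q) + r * δ) < l) := by
      intro r hr
      rw [mem_filter] at hr ⊢
      refine ⟨hr.1, ?_⟩
      have hrq := mem_range.mp hr.1
      have habs' := abs_le.mp (hrδ r hrq)
      have hstep := fract_lt_shift (h := 1/q + r * δ) (by linarith)
        (by linarith) hr.2
      have harg : ((β - 1/q) + (g r:ℝ)/q) + (1/q + r*δ) = β + (g r:ℝ)/q + r*δ := by ring
      rw [harg] at hstep
      have hfr : Int.fract (β + r * ((p : ℝ) / q) + r * δ)
          = Int.fract (β + (g r : ℝ) / q + r * δ) := by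
        rw [hpt r, Int.fract_add_intCast]
      rw [hfr]
      linarith
    have hcard := Finset.card_le_card hsub
    have hre : ((range q).filter
        (fun r : ℕ => Int.fract ((β - 1/q) + (g r : ℝ) / q) < l - 2/q)).card
        = ((range q).filter (fun m : ℕ => Int.fract ((β - 1/q) + (m : ℝ) / q) < l - 2/q)).card :=
      card_filter_reindex g hgmem hginj (fun m : ℕ => Int.fract ((β - 1/q) + (m : ℝ) / q) < l - 2/q)
    have hgrid := (grid_count q hq1 (β - 1/q) (l - 2/q)).2 (by linarith)
    have heq3 : (q:ℝ) * (l - 2/q) - 1 = q * l - 3 := by field_simp; ring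
    calc q * l - 3 = (q:ℝ) * (l - 2/q) - 1 := heq3.symm
      _ ≤ (((range q).filter
          (fun m : ℕ => Int.fract ((β - 1/q) + (m : ℝ) / q) < l - 2/q)).card : ℝ) := hgrid
      _ = (((range q).filter
          (fun r : ℕ => Int.fract ((β - 1/q) + (g r : ℝ) / q) < l - 2/q)).card : ℝ) := by
          exact_mod_cast hre.symm
      _ ≤ (((range q).filter
          (fun r : ℕ => Int.fract (β + r * ((p : ℝ) / q) + r * δ) < l)).card : ℝ) := by
          exact_mod_cast hcard
  rw [abs_le]
  constructor <;> linarith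
private lemma filter_range_add (m k : ℕ) (P : ℕ → Prop) [DecidablePred P] :
    ((range (m + k)).filter P).card
      = ((range m).filter P).card + ((range k).filter (fun i => P (m + i))).card := by
  induction k with
  | zero => simp
  | succ k ih =>
    have h1 : m + (k + 1) = (m + k) + 1 := by omega
    rw [h1, Finset.range_add_one, Finset.filter_insert, Finset.range_add_one, Finset.filter_insert]
    by_cases hP : P (m + k)
    · rw [if_pos hP, if_pos hP, Finset.card_insert_of_notMem, Finset.card_insert_of_notMem]
      · omega
      · intro h; exact absurd (mem_range.mp (Finset.mem_of_mem_filter _ h)) (by omega)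
      · intro h; exact absurd (mem_range.mp (Finset.mem_of_mem_filter _ h)) (by omega)
    · rw [if_neg hP, if_neg hP, ih]

private lemma cnt_bound (α : ℝ) (q : ℕ) (hq : 3 ≤ q) (p : ℤ) (hcop : Int.gcd p q = 1)
    (hδ : |α - p / q| ≤ 1 / q ^ 2) (n : ℕ) :
    ∀ L, L ≤ n → ∀ (a : ℕ) (u l : ℝ), 0 ≤ l → l ≤ 1 →
      |(((range L).filter (fun r : ℕ => Int.fract (α * (a + r) - u) < l)).card : ℝ) - L * l|
        ≤ 3 * ((n : ℝ) / q) + q := by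
  classical
  have hq0 : (0:ℝ) < q := by positivity
  intro L hL a u l hl0 hl1
  -- single block at any starting point
  have hblock : ∀ b : ℕ,
      |(((range q).filter (fun r : ℕ => Int.fract (α * (b + r) - u) < l)).card : ℝ) - q * l|
        ≤ 3 := by
    intro b
    have hcongr : (range q).filter (fun r : ℕ => Int.fract (α * (b + r) - u) < l)
        = (range q).filter
          (fun r : ℕ => Int.fract ((α * b - u) + r * ((p : ℝ) / q) + r * (α - p / q)) < l) := by
      apply Finset.filter_congr
      intro r _
      have : α * (b + r) - u = (α * b - u) + r * ((p : ℝ) / q) + r * (α - p / q) := by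
        push_cast; ring
      rw [this]
    rw [hcongr]
    exact block_count q hq p hcop (α - p / q) hδ (α * b - u) l hl0 hl1
  -- multiple blocks
  have hblocks : ∀ k : ℕ,
      |(((range (k * q)).filter (fun r : ℕ => Int.fract (α * (a + r) - u) < l)).card : ℝ)
        - (k * q : ℕ) * l| ≤ 3 * k := by
    intro k
    induction k with
    | zero => simp
    | succ k ih =>
      have h1 : (k + 1) * q = k * q + q := by ring
      rw [h1, filter_range_add]
      have harg : ∀ r : ℕ, α * ((a:ℝ) + ((k * q + r : ℕ) : ℝ)) - u
          = α * (((a + k * q : ℕ) : ℝ) + (r:ℝ)) - u := by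
        intro r; push_cast; ring
      have hcongr : (range q).filter
            (fun i : ℕ => Int.fract (α * ((a:ℝ) + ((k * q + i : ℕ) : ℝ)) - u) < l)
          = (range q).filter
            (fun r : ℕ => Int.fract (α * (((a + k * q : ℕ) : ℝ) + (r:ℝ)) - u) < l) := by
        apply Finset.filter_congr
        intro r _
        rw [harg r]
      rw [hcongr]
      have hb := hblock (a + k * q)
      rw [abs_le] at ih hb ⊢
      push_cast at ih hb ⊢
      constructor <;> linarith
  -- decompose L
  have hdm : (L / q) * q + L % q = L := Nat.div_add_mod' L q
  have hsq : L % q < q := Nat.mod_lt _ (by omega)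
  have hcard := filter_range_add ((L / q) * q) (L % q)
    (fun r : ℕ => Int.fract (α * (a + r) - u) < l)
  have h1 := hblocks (L / q)
  set X : ℕ := ((range ((L / q) * q)).filter (fun r : ℕ => Int.fract (α * (a + r) - u) < l)).card with hXdef
  set Y : ℕ := ((range (L % q)).filter
    (fun i : ℕ => Int.fract (α * ((a:ℝ) + ((L / q * q + i : ℕ) : ℝ)) - u) < l)).card with hYdef
  have hY : Y ≤ L % q := le_trans (Finset.card_filter_le _ _) (le_of_eq (card_range _))
  have htot : ((range L).filter (fun r : ℕ => Int.fract (α * (a + r) - u) < l)).card = X + Y := by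
    rw [← hdm]; exact hcard
  have hYb : |(Y : ℝ) - ((L % q : ℕ) : ℝ) * l| ≤ ((L % q : ℕ) : ℝ) := by
    have hYr : (Y : ℝ) ≤ ((L % q : ℕ) : ℝ) := by exact_mod_cast hY
    have hY0 : (0:ℝ) ≤ (Y:ℝ) := by positivity
    have hs0 : (0:ℝ) ≤ ((L % q : ℕ) : ℝ) := by positivity
    rw [abs_le]
    constructor
    · nlinarith
    · nlinarith
  have hq3 : 3 * (((L / q : ℕ) : ℝ)) ≤ 3 * ((n:ℝ) / q) := by
    have hle : ((L / q : ℕ) : ℝ) ≤ (n:ℝ) / q := by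
      rw [le_div_iff₀ hq0]
      have : (L / q) * q ≤ n := le_trans (Nat.div_mul_le_self L q) hL
      exact_mod_cast this
    linarith
  have hsq' : ((L % q : ℕ) : ℝ) ≤ (q : ℝ) := by exact_mod_cast hsq.le
  rw [htot]
  have hcastXY : (((X + Y : ℕ)) : ℝ) = (X:ℝ) + (Y:ℝ) := by push_cast; ring
  rw [hcastXY]
  have key : (X:ℝ) + Y - L * l
      = ((X:ℝ) - (((L/q)*q : ℕ):ℝ) * l) + ((Y:ℝ) - ((L%q : ℕ):ℝ) * l) := by
    have hc : ((L:ℕ):ℝ) * l = ((((L/q)*q:ℕ)):ℝ) * l + (((L%q:ℕ)):ℝ) * l := by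
      have h' : ((L:ℕ):ℝ) = (((L/q)*q:ℕ):ℝ) + ((L%q:ℕ):ℝ) := by exact_mod_cast hdm.symm
      rw [h']; ring
    linarith
  rw [key]
  calc |((X:ℝ) - (((L/q)*q : ℕ):ℝ) * l) + ((Y:ℝ) - ((L%q : ℕ):ℝ) * l)|
      ≤ |(X:ℝ) - (((L/q)*q : ℕ):ℝ) * l| + |(Y:ℝ) - ((L%q : ℕ):ℝ) * l| := abs_add_le _ _
    _ ≤ 3 * (((L / q : ℕ)) : ℝ) + ((L % q : ℕ) : ℝ) := add_le_add h1 hYb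
    _ ≤ 3 * ((n:ℝ)/q) + q := add_le_add hq3 hsq'

private lemma cntLE_bound (α : ℝ) (hα : Irrational α) (q : ℕ) (hq : 3 ≤ q) (p : ℤ)
    (hcop : Int.gcd p q = 1) (hδ : |α - p / q| ≤ 1 / q ^ 2) (n L a : ℕ)
    (hL : L ≤ n) (ha : 1 ≤ a) (w : ℝ) (h0 : 0 ≤ w) (h1 : w ≤ 1) :
    |(((range L).filter (fun r : ℕ => Int.fract (α * (a + r)) ≤ w)).card : ℝ) - L * w|
      ≤ 3 * ((n : ℝ) / q) + q + 1 := by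
  classical
  have hlt := cnt_bound α q hq p hcop hδ n L hL a 0 w h0 h1
  have hcongr : (range L).filter (fun r : ℕ => Int.fract (α * (a + r) - 0) < w)
      = (range L).filter (fun r : ℕ => Int.fract (α * (a + r)) < w) := by
    apply Finset.filter_congr; intro r _; rw [sub_zero]
  rw [hcongr] at hlt
  set Slt := (range L).filter (fun r : ℕ => Int.fract (α * (a + r)) < w) with hSlt
  set Sle := (range L).filter (fun r : ℕ => Int.fract (α * (a + r)) ≤ w) with hSle
  have hsub1 : Slt ⊆ Sle := by
    intro r hr
    rw [hSlt, mem_filter] at hr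
    exact mem_filter.mpr ⟨hr.1, le_of_lt hr.2⟩
  have hsub2 : Sle ⊆ Slt ∪ ((range L).filter (fun r : ℕ => Int.fract (α * (a + r)) = w)) := by
    intro r hr
    rw [hSle, mem_filter] at hr
    rcases lt_or_eq_of_le hr.2 with h | h
    · exact Finset.mem_union_left _ (mem_filter.mpr ⟨hr.1, h⟩)
    · exact Finset.mem_union_right _ (mem_filter.mpr ⟨hr.1, h⟩)
  have heq1 : ((range L).filter (fun r : ℕ => Int.fract (α * (a + r)) = w)).card ≤ 1 := by
    rw [Finset.card_le_one]
    intro r₁ hr₁ r₂ hr₂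
    rw [mem_filter] at hr₁ hr₂
    have heqf : Int.fract (α * ((a + r₁ : ℕ) : ℝ)) = Int.fract (α * ((a + r₂ : ℕ) : ℝ)) := by
      push_cast
      rw [hr₁.2, hr₂.2]
    have : a + r₁ = a + r₂ := fract_eq_imp α hα heqf
    omega
  have hle2 : Sle.card ≤ Slt.card + 1 :=
    le_trans (Finset.card_le_card hsub2) (le_trans (Finset.card_union_le _ _) (by omega))
  have hge : Slt.card ≤ Sle.card := Finset.card_le_card hsub1
  have hc1 : (Slt.card : ℝ) ≤ Sle.card := by exact_mod_cast hge
  have hc2 : (Sle.card : ℝ) ≤ Slt.card + 1 := by exact_mod_cast hle2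
  rw [abs_le] at hlt ⊢
  constructor <;> linarith

private lemma cntIv_bound (α : ℝ) (hα : Irrational α) (q : ℕ) (hq : 3 ≤ q) (p : ℤ)
    (hcop : Int.gcd p q = 1) (hδ : |α - p / q| ≤ 1 / q ^ 2) (n L a : ℕ)
    (hL : L ≤ n) (ha : 1 ≤ a) (u v : ℝ) (h0 : 0 ≤ u) (huv : u ≤ v) (h1 : v ≤ 1) :
    |(((range L).filter (fun r : ℕ => u < Int.fract (α * (a + r))
        ∧ Int.fract (α * (a + r)) ≤ v)).card : ℝ) - L * (v - u)|
      ≤ 2 * (3 * ((n : ℝ) / q) + q + 1) := by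
  classical
  have hu := cntLE_bound α hα q hq p hcop hδ n L a hL ha u h0 (le_trans huv h1)
  have hv := cntLE_bound α hα q hq p hcop hδ n L a hL ha v (le_trans h0 huv) h1
  have hsplit : ((range L).filter (fun r : ℕ => Int.fract (α * (a + r)) ≤ v)).card
      = ((range L).filter (fun r : ℕ => Int.fract (α * (a + r)) ≤ u)).card
        + ((range L).filter (fun r : ℕ => u < Int.fract (α * (a + r))
            ∧ Int.fract (α * (a + r)) ≤ v)).card := by
    have e1 : ((range L).filter (fun r : ℕ => Int.fract (α * (a + r)) ≤ v)).filter
        (fun r : ℕ => Int.fract (α * (a + r)) ≤ u)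
        = (range L).filter (fun r : ℕ => Int.fract (α * (a + r)) ≤ u) := by
      rw [Finset.filter_filter]
      apply Finset.filter_congr
      intro r _
      constructor
      · exact fun h => h.2
      · exact fun h => ⟨le_trans h huv, h⟩
    have e2 : ((range L).filter (fun r : ℕ => Int.fract (α * (a + r)) ≤ v)).filter
        (fun r : ℕ => ¬ Int.fract (α * (a + r)) ≤ u)
        = (range L).filter (fun r : ℕ => u < Int.fract (α * (a + r))
            ∧ Int.fract (α * (a + r)) ≤ v) := by
      rw [Finset.filter_filter]
      apply Finset.filter_congr
      intro r _
      constructor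
      · exact fun h => ⟨not_le.mp h.2, h.1⟩
      · exact fun h => ⟨h.2, not_le.mpr h.1⟩
    rw [← Finset.card_filter_add_card_filter_not
      (p := fun r : ℕ => Int.fract (α * (a + r)) ≤ u)
      (s := (range L).filter (fun r : ℕ => Int.fract (α * (a + r)) ≤ v)), e1, e2]
  have hcast : ((((range L).filter (fun r : ℕ => Int.fract (α * (a + r)) ≤ v)).card : ℕ) : ℝ)
      = ((((range L).filter (fun r : ℕ => Int.fract (α * (a + r)) ≤ u)).card : ℕ) : ℝ)
        + ((((range L).filter (fun r : ℕ => u < Int.fract (α * (a + r))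
            ∧ Int.fract (α * (a + r)) ≤ v)).card : ℕ) : ℝ) := by
    exact_mod_cast congrArg (Nat.cast : ℕ → ℝ) hsplit
  rw [abs_le] at hu hv ⊢
  constructor <;> nlinarith [hcast]
private lemma fracSet_card (α : ℝ) (hα : Irrational α) (n : ℕ) : (fracSet α n).card = n := by
  rw [fracSet, Finset.card_image_of_injOn, Nat.card_Icc]
  · omega
  · intro s _ t _ h
    exact fract_eq_imp α hα h

private lemma fracSet_bounds (α : ℝ) {n : ℕ} {a : ℝ} (ha : a ∈ fracSet α n) :
    0 ≤ a ∧ a < 1 := by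
  rw [fracSet, Finset.mem_image] at ha
  obtain ⟨x, _, rfl⟩ := ha
  exact ⟨Int.fract_nonneg _, Int.fract_lt_one _⟩

private noncomputable def zval (α : ℝ) (n c : ℕ) : ℝ :=
  if h : (fracSet α n).card = n ∧ 1 ≤ c ∧ c ≤ n then
    (fracSet α n).orderEmbOfFin h.1 ⟨c - 1, by omega⟩
  else 0

private lemma zval_eq (α : ℝ) (hα : Irrational α) {n c : ℕ} (hc1 : 1 ≤ c) (hc2 : c ≤ n) :
    zval α n c = (fracSet α n).orderEmbOfFin (fracSet_card α hα n) ⟨c - 1, by omega⟩ := by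
  rw [zval, dif_pos ⟨fracSet_card α hα n, hc1, hc2⟩]

private lemma zval_zero (α : ℝ) (n : ℕ) : zval α n 0 = 0 := by
  rw [zval, dif_neg]
  rintro ⟨-, h, -⟩
  omega

private lemma zval_mem (α : ℝ) (hα : Irrational α) {n c : ℕ} (hc1 : 1 ≤ c) (hc2 : c ≤ n) :
    zval α n c ∈ fracSet α n := by
  rw [zval_eq α hα hc1 hc2]
  exact Finset.orderEmbOfFin_mem _ _ _

private lemma zval_nonneg (α : ℝ) (hα : Irrational α) {n : ℕ} (c : ℕ) (hc2 : c ≤ n) :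
    0 ≤ zval α n c := by
  rcases Nat.eq_zero_or_pos c with rfl | hc
  · rw [zval_zero]
  · exact (fracSet_bounds α (zval_mem α hα hc hc2)).1

private lemma zval_le_one (α : ℝ) (hα : Irrational α) {n : ℕ} (c : ℕ) (hc2 : c ≤ n) :
    zval α n c ≤ 1 := by
  rcases Nat.eq_zero_or_pos c with rfl | hc
  · rw [zval_zero]; norm_num
  · exact le_of_lt (fracSet_bounds α (zval_mem α hα hc hc2)).2

private lemma zval_mono (α : ℝ) (hα : Irrational α) {n c c' : ℕ} (hcc : c ≤ c') (hc' : c' ≤ n) :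
    zval α n c ≤ zval α n c' := by
  rcases Nat.eq_zero_or_pos c with rfl | hc
  · rw [zval_zero]
    exact zval_nonneg α hα c' hc'
  · rw [zval_eq α hα hc (le_trans hcc hc'), zval_eq α hα (le_trans hc hcc) hc']
    exact ((fracSet α n).orderEmbOfFin (fracSet_card α hα n)).monotone (by simp; omega)

private lemma sos_eq_rank (α : ℝ) (hα : Irrational α) {n t : ℕ} (ht : t ∈ Finset.Icc 1 n) :
    sos α n t = ((fracSet α n).filter (fun a => a ≤ Int.fract (α * t))).card := by
  classical
  rw [sos, Finset.filter_congr_decidable]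
  rw [fracSet, Finset.filter_image]
  rw [Finset.card_image_of_injOn]
  intro s hs t' ht' h
  exact fract_eq_imp α hα h

private lemma sos_pos (α : ℝ) {n t : ℕ} (ht : t ∈ Finset.Icc 1 n) : 1 ≤ sos α n t := by
  rw [sos]
  rw [Nat.succ_le_iff, Finset.card_pos]
  exact ⟨t, Finset.mem_filter.mpr ⟨ht, le_refl _⟩⟩

private lemma sos_le (α : ℝ) {n t : ℕ} : sos α n t ≤ n := by
  rw [sos]
  calc _ ≤ (Finset.Icc 1 n).card := Finset.card_filter_le _ _
    _ = n := by rw [Nat.card_Icc]; omega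

private lemma rank_zval (α : ℝ) (hα : Irrational α) {n j : ℕ} (hj1 : 1 ≤ j) (hj2 : j ≤ n) :
    ((fracSet α n).filter (fun a => a ≤ zval α n j)).card = j := by
  classical
  set F := (fracSet α n).orderEmbOfFin (fracSet_card α hα n) with hF
  rw [zval_eq α hα hj1 hj2]
  have himg : (fracSet α n).filter (fun a => a ≤ F ⟨j - 1, by omega⟩)
      = (Finset.univ.filter (fun i : Fin n => i ≤ ⟨j - 1, by omega⟩)).image (fun i => F i) := by
    ext a
    simp only [Finset.mem_filter, Finset.mem_image, Finset.mem_univ, true_and]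
    constructor
    · rintro ⟨haA, hale⟩
      have : a ∈ Set.range F := by
        rw [hF, Finset.range_orderEmbOfFin]
        exact haA
      obtain ⟨i, rfl⟩ := this
      exact ⟨i, F.le_iff_le.mp hale, rfl⟩
    · rintro ⟨i, hi, rfl⟩
      exact ⟨Finset.orderEmbOfFin_mem _ _ _, F.le_iff_le.mpr hi⟩
  rw [himg, Finset.card_image_of_injective _ F.injective]
  have : Finset.univ.filter (fun i : Fin n => i ≤ (⟨j - 1, by omega⟩ : Fin n)) 
      = Finset.Iic (⟨j - 1, by omega⟩ : Fin n) := by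
    ext i; simp
  rw [this, Fin.card_Iic]
  simp only [Fin.val_mk]
  omega

private lemma sos_val (α : ℝ) (hα : Irrational α) {n t : ℕ} (ht : t ∈ Finset.Icc 1 n) :
    Int.fract (α * t) = zval α n (sos α n t) := by
  classical
  set F := (fracSet α n).orderEmbOfFin (fracSet_card α hα n) with hF
  have hmem : Int.fract (α * t) ∈ fracSet α n := by
    rw [fracSet, Finset.mem_image]
    exact ⟨t, ht, rfl⟩
  have : Int.fract (α * t) ∈ Set.range F := by
    rw [hF, Finset.range_orderEmbOfFin]; exact hmem
  obtain ⟨i, hi⟩ := this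
  have hrank : sos α n t = (i : ℕ) + 1 := by
    rw [sos_eq_rank α hα ht]
    have := rank_zval α hα (n := n) (j := (i : ℕ) + 1) (by omega) (by omega)
    rw [zval_eq α hα (by omega) (by omega)] at this
    have hii : (⟨(i : ℕ) + 1 - 1, by omega⟩ : Fin n) = i := by
      apply Fin.ext; simp
    rw [hii, hi] at this
    exact this
  rw [hrank, zval_eq α hα (by omega) (by omega)]
  have hii : (⟨(i : ℕ) + 1 - 1, by omega⟩ : Fin n) = i := by
    apply Fin.ext; simp
  rw [hii, hi]

private lemma sos_le_iff (α : ℝ) (hα : Irrational α) {n t : ℕ} (ht : t ∈ Finset.Icc 1 n)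
    {c : ℕ} (hc : c ≤ n) : (sos α n t ≤ c ↔ Int.fract (α * t) ≤ zval α n c) := by
  have ht1 : 1 ≤ t := (Finset.mem_Icc.mp ht).1
  rcases Nat.eq_zero_or_pos c with rfl | hc1
  · rw [zval_zero]
    constructor
    · intro h; exact absurd h (by have := sos_pos α ht; omega)
    · intro h; exact absurd h (not_le.mpr (fract_pos α hα ht1))
  · constructor
    · intro h
      rw [sos_val α hα ht]
      exact zval_mono α hα h hc
    · intro h
      have hr := sos_eq_rank α hα ht
      have hsub : ((fracSet α n).filter (fun a => a ≤ Int.fract (α * t)))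
          ⊆ ((fracSet α n).filter (fun a => a ≤ zval α n c)) := by
        intro a ha
        rw [Finset.mem_filter] at ha ⊢
        exact ⟨ha.1, le_trans ha.2 h⟩
      have := Finset.card_le_card hsub
      rw [← hr, rank_zval α hα hc1 hc] at this
      exact this

private lemma lt_sos_iff (α : ℝ) (hα : Irrational α) {n t : ℕ} (ht : t ∈ Finset.Icc 1 n)
    {c : ℕ} (hc : c ≤ n) : (c < sos α n t ↔ zval α n c < Int.fract (α * t)) := by
  rw [lt_iff_not_ge, lt_iff_not_ge]
  exact not_congr (sos_le_iff α hα ht hc)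

private lemma sos_image (α : ℝ) (hα : Irrational α) (n : ℕ) :
    (Finset.Icc 1 n).image (sos α n) = Finset.Icc 1 n := by
  have hinj : Set.InjOn (sos α n) (Finset.Icc 1 n) := by
    intro s hs t ht h
    apply fract_eq_imp α hα
    rw [sos_val α hα (by exact_mod_cast hs), sos_val α hα (by exact_mod_cast ht), h]
  apply Finset.eq_of_subset_of_card_le
  · intro x hx
    obtain ⟨t, ht, rfl⟩ := Finset.mem_image.mp hx
    exact Finset.mem_Icc.mpr ⟨sos_pos α ht, sos_le α⟩
  · rw [Finset.card_image_of_injOn hinj]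

private lemma count_sos_Icc (α : ℝ) (hα : Irrational α) {n c c' : ℕ}
    (hcc : c ≤ c') (hc' : c' ≤ n) :
    ((Finset.Icc 1 n).filter (fun t => c < sos α n t ∧ sos α n t ≤ c')).card = c' - c := by
  classical
  have hinj : Set.InjOn (sos α n) (Finset.Icc 1 n) := by
    intro s hs t ht h
    apply fract_eq_imp α hα
    rw [sos_val α hα (by exact_mod_cast hs), sos_val α hα (by exact_mod_cast ht), h]
  calc ((Finset.Icc 1 n).filter (fun t => c < sos α n t ∧ sos α n t ≤ c')).card
      = (((Finset.Icc 1 n).filter (fun t => c < sos α n t ∧ sos α n t ≤ c')).image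
          (sos α n)).card := (Finset.card_image_of_injOn
            (hinj.mono (Finset.filter_subset _ _))).symm
    _ = (((Finset.Icc 1 n).image (sos α n)).filter (fun j => c < j ∧ j ≤ c')).card := by
        rw [Finset.filter_image]
    _ = ((Finset.Icc 1 n).filter (fun j => c < j ∧ j ≤ c')).card := by
        rw [sos_image α hα]
    _ = (Finset.Icc (c + 1) c').card := by
        congr 1
        ext j
        simp only [Finset.mem_filter, Finset.mem_Icc]
        omega
    _ = c' - c := by rw [Nat.card_Icc]; omega
private lemma count_reindex (α : ℝ) (hα : Irrational α) {n : ℕ} (a L c c' : ℕ)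
    (hL : a + L ≤ n) (hc : c ≤ n) (hc' : c' ≤ n) :
    ((Finset.Icc (a+1) (a+L)).filter
        (fun t => c < sos α n t ∧ sos α n t ≤ c')).card
      = ((range L).filter (fun r : ℕ => zval α n c < Int.fract (α * ((a+1 : ℕ) + (r:ℝ)))
          ∧ Int.fract (α * ((a+1 : ℕ) + (r:ℝ))) ≤ zval α n c')).card := by
  classical
  apply Finset.card_bij' (fun t _ => t - (a+1)) (fun r _ => a + 1 + r)
  · intro t ht
    rw [Finset.mem_filter, Finset.mem_Icc] at ht
    obtain ⟨⟨ht1, ht2⟩, hP⟩ := ht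
    have htIcc : t ∈ Finset.Icc 1 n := Finset.mem_Icc.mpr ⟨by omega, by omega⟩
    rw [Finset.mem_filter, mem_range]
    have harg : ((a+1 : ℕ) : ℝ) + ((t - (a+1) : ℕ) : ℝ) = (t : ℝ) := by
      have : (a + 1) + (t - (a+1)) = t := by omega
      exact_mod_cast congrArg (Nat.cast : ℕ → ℝ) this
    refine ⟨by omega, ?_, ?_⟩
    · rw [harg]
      exact (lt_sos_iff α hα htIcc hc).mp hP.1
    · rw [harg]
      exact (sos_le_iff α hα htIcc hc').mp hP.2
  · intro r hr
    rw [Finset.mem_filter, mem_range] at hr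
    obtain ⟨hr1, hP1, hP2⟩ := hr
    have htIcc : a + 1 + r ∈ Finset.Icc 1 n := Finset.mem_Icc.mpr ⟨by omega, by omega⟩
    rw [Finset.mem_filter, Finset.mem_Icc]
    have harg : ((a+1 : ℕ) : ℝ) + (r : ℝ) = ((a + 1 + r : ℕ) : ℝ) := by push_cast; ring
    rw [harg] at hP1 hP2
    exact ⟨⟨by omega, by omega⟩,
      (lt_sos_iff α hα htIcc hc).mpr hP1, (sos_le_iff α hα htIcc hc').mpr hP2⟩
  · intro t ht
    rw [Finset.mem_filter, Finset.mem_Icc] at ht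
    omega
  · intro r hr
    omega

private lemma MB (α : ℝ) (hα : Irrational α) (q : ℕ) (hq : 3 ≤ q) (p : ℤ)
    (hcop : Int.gcd p q = 1) (hδ : |α - p / q| ≤ 1 / q ^ 2) {n : ℕ} (hn : 1 ≤ n)
    (a L c c' : ℕ) (hL : a + L ≤ n) (hcc : c ≤ c') (hc' : c' ≤ n) :
    |(((Finset.Icc (a+1) (a+L)).filter
        (fun t => c < sos α n t ∧ sos α n t ≤ c')).card : ℝ)
      - (L : ℝ) * ((c' : ℝ) - c) / n| ≤ 4 * (3 * ((n : ℝ) / q) + q + 1) := by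
  classical
  have hn0 : (0:ℝ) < n := by exact_mod_cast hn
  have hc : c ≤ n := le_trans hcc hc'
  set u := zval α n c with hu
  set v := zval α n c' with hv
  have h0 : 0 ≤ u := zval_nonneg α hα c hc
  have huv : u ≤ v := zval_mono α hα hcc hc'
  have h1 : v ≤ 1 := zval_le_one α hα c' hc'
  -- interval count
  have hcb := count_reindex α hα a L c c' hL hc hc'
  have hIv := cntIv_bound α hα q hq p hcop hδ n L (a+1) (by omega) (by omega) u v h0 huv h1
  rw [← hcb] at hIv
  -- exact count over the whole range
  have hcb0 := count_reindex α hα 0 n c c' (by omega) hc hc'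
  have hIv0 := cntIv_bound α hα q hq p hcop hδ n n (0+1) (le_refl n) (by omega) u v h0 huv h1
  rw [← hcb0] at hIv0
  have hexact : ((Finset.Icc (0+1) (0+n)).filter
      (fun t => c < sos α n t ∧ sos α n t ≤ c')).card = c' - c := by
    have : Finset.Icc (0+1) (0+n) = Finset.Icc 1 n := by norm_num
    rw [this]
    exact count_sos_Icc α hα hcc hc'
  rw [hexact] at hIv0
  have hcast : (((c' - c : ℕ)) : ℝ) = (c' : ℝ) - c := by rw [Nat.cast_sub hcc]
  rw [hcast] at hIv0
  -- combine
  have hLn : (L : ℝ) ≤ (n : ℝ) := by exact_mod_cast (by omega : L ≤ n)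
  have hL0 : (0:ℝ) ≤ (L : ℝ) := by positivity
  set E := 3 * ((n : ℝ) / q) + q + 1 with hE
  have hE0 : 0 ≤ E := by
    have : (0:ℝ) < q := by positivity
    have h3 : (0:ℝ) ≤ 3 * ((n : ℝ) / q) := by positivity
    rw [hE]; positivity
  set X : ℝ := (((Finset.Icc (a+1) (a+L)).filter
      (fun t => c < sos α n t ∧ sos α n t ≤ c')).card : ℝ) with hX
  have hkey : X - (L : ℝ) * ((c' : ℝ) - c) / n
      = (X - L * (v - u)) + ((L:ℝ) / n) * ((n : ℝ) * (v - u) - ((c' : ℝ) - c)) := by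
    field_simp
    ring
  rw [hkey]
  calc |(X - L * (v - u)) + ((L:ℝ) / n) * ((n : ℝ) * (v - u) - ((c' : ℝ) - c))|
      ≤ |X - L * (v - u)| + |((L:ℝ) / n) * ((n : ℝ) * (v - u) - ((c' : ℝ) - c))| := abs_add_le _ _
    _ ≤ 2 * E + |((L:ℝ) / n)| * |(n : ℝ) * (v - u) - ((c' : ℝ) - c)| := by
        rw [abs_mul]
        exact add_le_add hIv (le_refl _)
    _ ≤ 2 * E + 1 * (2 * E) := by
        have hq1 : |((L:ℝ) / n)| ≤ 1 := by
          rw [abs_of_nonneg (by positivity)]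
          rw [div_le_one hn0]
          exact hLn
        have h2 : |(n : ℝ) * (v - u) - ((c' : ℝ) - c)| ≤ 2 * E := by
          rw [abs_sub_comm]
          exact hIv0
        gcongr
    _ ≤ 4 * E := by linarith
private lemma MBp (α : ℝ) (hα : Irrational α) (q : ℕ) (hq : 3 ≤ q) (p : ℤ)
    (hcop : Int.gcd p q = 1) (hδ : |α - p / q| ≤ 1 / q ^ 2) {n : ℕ} (hn : 1 ≤ n)
    (lo hi lo' hi' : ℕ) (hlo : 1 ≤ lo) (hlo2 : lo ≤ n + 1) (hhi : hi ≤ n)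
    (hlo' : 1 ≤ lo') (hlo2' : lo' ≤ n + 1) (hhi' : hi' ≤ n) :
    |(((Finset.Icc lo hi).filter (fun t => lo' ≤ sos α n t ∧ sos α n t ≤ hi')).card : ℝ)
      - ((Finset.Icc lo hi).card : ℝ) * ((Finset.Icc lo' hi').card : ℝ) / n|
      ≤ 4 * (3 * ((n : ℝ) / q) + q + 1) := by
  classical
  set a := lo - 1 with ha
  set L := hi + 1 - lo with hL
  set c := lo' - 1 with hc
  set c' := max (lo' - 1) hi' with hc'
  have hIcc : Finset.Icc lo hi = Finset.Icc (a+1) (a+L) := by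
    ext x; simp only [Finset.mem_Icc]; omega
  have hpred : ∀ t ∈ Finset.Icc (a+1) (a+L),
      ((lo' ≤ sos α n t ∧ sos α n t ≤ hi') ↔ (c < sos α n t ∧ sos α n t ≤ c')) := by
    intro t _
    omega
  have hcard1 : (Finset.Icc lo hi).card = L := by rw [Nat.card_Icc]
  have hcard2 : (Finset.Icc lo' hi').card = c' - c := by rw [Nat.card_Icc]; omega
  rw [hcard1, hcard2, hIcc, Finset.filter_congr hpred]
  have hcast : ((c' - c : ℕ) : ℝ) = (c' : ℝ) - c := by rw [Nat.cast_sub (by omega : c ≤ c')]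
  rw [hcast]
  exact MB α hα q hq p hcop hδ hn a L c c' (by omega) (by omega) (by omega)

private lemma card_eq_pi_count {n : ℕ} (hn : 1 ≤ n) (T : Finset (ZMod n)) :
    T.card = ((Finset.Icc 1 n).filter (fun t : ℕ => ((t : ℕ) : ZMod n) ∈ T)).card := by
  classical
  haveI : NeZero n := ⟨by omega⟩
  symm
  apply Finset.card_bij (fun (t : ℕ) _ => ((t : ℕ) : ZMod n))
  · intro t ht
    exact (Finset.mem_filter.mp ht).2
  · intro t₁ ht₁ t₂ ht₂ heq
    have h₁ := Finset.mem_Icc.mp (Finset.mem_of_mem_filter _ ht₁)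
    have h₂ := Finset.mem_Icc.mp (Finset.mem_of_mem_filter _ ht₂)
    have hmod : t₁ % n = t₂ % n := (ZMod.natCast_eq_natCast_iff _ _ _).mp heq
    have k₁ : t₁ % n = t₁ ∨ (t₁ = n ∧ t₁ % n = 0) := by
      rcases eq_or_lt_of_le h₁.2 with h | h
      · exact Or.inr ⟨h, by rw [h, Nat.mod_self]⟩
      · exact Or.inl (Nat.mod_eq_of_lt h)
    have k₂ : t₂ % n = t₂ ∨ (t₂ = n ∧ t₂ % n = 0) := by
      rcases eq_or_lt_of_le h₂.2 with h | h
      · exact Or.inr ⟨h, by rw [h, Nat.mod_self]⟩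
      · exact Or.inl (Nat.mod_eq_of_lt h)
    omega
  · intro x hx
    by_cases h0 : x.val = 0
    · have hx0 : x = 0 := by rwa [← ZMod.val_eq_zero x]
      refine ⟨n, Finset.mem_filter.mpr ⟨Finset.mem_Icc.mpr ⟨by omega, le_refl n⟩, ?_⟩, ?_⟩
      · rw [ZMod.natCast_self]
        exact hx0 ▸ hx
      · rw [ZMod.natCast_self, hx0]
    · refine ⟨x.val, Finset.mem_filter.mpr ⟨Finset.mem_Icc.mpr ⟨by omega, (ZMod.val_lt x).le⟩, ?_⟩, ?_⟩
      · rw [ZMod.natCast_rightInverse x]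
        exact hx
      · exact ZMod.natCast_rightInverse x

private def ivb (n a : ℕ) : ℕ := if a % n = 0 then n else a % n

private lemma ivb_props {n : ℕ} (hn : 1 ≤ n) (a : ℕ) :
    1 ≤ ivb n a ∧ ivb n a ≤ n ∧ a % n = (ivb n a) % n := by
  rw [ivb]
  split_ifs with h
  · exact ⟨hn, le_refl n, by rw [Nat.mod_self, h]⟩
  · have := Nat.mod_lt a (show 0 < n by omega)
    exact ⟨by omega, by omega, by rw [Nat.mod_eq_of_lt this]⟩

private lemma mem_interval_iff {n : ℕ} (hn : 1 ≤ n) (a len : ℕ) (hlen : len ≤ n)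
    {t : ℕ} (ht1 : 1 ≤ t) (ht2 : t ≤ n) :
    ((((t : ℕ) : ZMod n)) ∈ (range len).image (fun i : ℕ => ((a + i : ℕ) : ZMod n)))
      ↔ ((ivb n a ≤ t ∧ t ≤ min n (ivb n a + len - 1))
          ∨ (1 ≤ t ∧ t + n + 1 ≤ ivb n a + len)) := by
  classical
  obtain ⟨hb1, hb2, hbmod⟩ := ivb_props hn a
  set b := ivb n a with hbdef
  have hab : a ≡ b [MOD n] := hbmod
  rw [Finset.mem_image]
  constructor
  · rintro ⟨i, hi, hcast⟩
    rw [mem_range] at hi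
    have hmeq : a + i ≡ t [MOD n] := (ZMod.natCast_eq_natCast_iff _ _ _).mp hcast
    have hbi : b + i ≡ t [MOD n] := ((hab.symm.add_right i).trans hmeq)
    rcases le_or_gt t (b + i) with hle | hlt
    · have hdvd : n ∣ (b + i - t) := (Nat.modEq_iff_dvd' hle).mp hbi.symm
      obtain ⟨k, hk⟩ := hdvd
      have hklt : k < 2 := by
        by_contra h2
        push_neg at h2
        have : 2 * n ≤ n * k := by nlinarith
        omega
      interval_cases k
      · left; omega
      · right; omega
    · have hdvd : n ∣ (t - (b + i)) := (Nat.modEq_iff_dvd' hlt.le).mp hbi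
      have := Nat.eq_zero_of_dvd_of_lt hdvd (by omega)
      omega
  · rintro (⟨h1, h2⟩ | ⟨h1, h2⟩)
    · refine ⟨t - b, mem_range.mpr (by omega), ?_⟩
      rw [ZMod.natCast_eq_natCast_iff]
      have := hab.add_right (t - b)
      rwa [show b + (t - b) = t from by omega] at this
    · refine ⟨t + n - b, mem_range.mpr (by omega), ?_⟩
      rw [ZMod.natCast_eq_natCast_iff]
      have h3 := hab.add_right (t + n - b)
      rw [show b + (t + n - b) = t + n from by omega] at h3
      exact h3.trans (Nat.add_mod_right t n)

private lemma interval_clamp {n : ℕ} (hn : 1 ≤ n) (a len : ℕ) (hlen : n ≤ len) :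
    (range len).image (fun i : ℕ => ((a + i : ℕ) : ZMod n))
      = (range n).image (fun i : ℕ => ((a + i : ℕ) : ZMod n)) := by
  classical
  apply Finset.Subset.antisymm
  · intro x hx
    obtain ⟨i, hi, rfl⟩ := Finset.mem_image.mp hx
    refine Finset.mem_image.mpr ⟨i % n, mem_range.mpr (Nat.mod_lt _ (by omega)), ?_⟩
    rw [ZMod.natCast_eq_natCast_iff]
    exact (Nat.mod_modEq i n).add_left a
  · exact Finset.image_subset_image (Finset.range_subset_range.mpr hlen)

private lemma split_count2 (s : Finset ℕ) (P Q R : ℕ → Prop) [DecidablePred P]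
    [DecidablePred Q] [DecidablePred R] (h : ∀ t ∈ s, ¬(Q t ∧ R t)) :
    (s.filter (fun t => P t ∧ (Q t ∨ R t))).card
      = (s.filter (fun t => P t ∧ Q t)).card + (s.filter (fun t => P t ∧ R t)).card := by
  have hun : s.filter (fun t => P t ∧ (Q t ∨ R t))
      = s.filter (fun t => P t ∧ Q t) ∪ s.filter (fun t => P t ∧ R t) := by
    ext t
    simp only [Finset.mem_filter, Finset.mem_union]
    tauto
  have hdisj : Disjoint (s.filter (fun t => P t ∧ Q t)) (s.filter (fun t => P t ∧ R t)) := by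
    rw [Finset.disjoint_left]
    intro t ht1 ht2
    rw [Finset.mem_filter] at ht1 ht2
    exact h t ht1.1 ⟨ht1.2.2, ht2.2.2⟩
  rw [hun, Finset.card_union_of_disjoint hdisj]

private lemma split_count1 (s : Finset ℕ) (Q R : ℕ → Prop)
    [DecidablePred Q] [DecidablePred R] (h : ∀ t ∈ s, ¬(Q t ∧ R t)) :
    (s.filter (fun t => Q t ∨ R t)).card = (s.filter Q).card + (s.filter R).card := by
  have hun : s.filter (fun t => Q t ∨ R t) = s.filter Q ∪ s.filter R := by
    ext t
    simp only [Finset.mem_filter, Finset.mem_union]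
    tauto
  have hdisj : Disjoint (s.filter Q) (s.filter R) := by
    rw [Finset.disjoint_left]
    intro t ht1 ht2
    rw [Finset.mem_filter] at ht1 ht2
    exact h t ht1.1 ⟨ht1.2, ht2.2⟩
  rw [hun, Finset.card_union_of_disjoint hdisj]

private lemma filter_Icc_eq {n lo hi : ℕ} (h1 : 1 ≤ lo) (h2 : hi ≤ n) :
    (Finset.Icc 1 n).filter (fun t => lo ≤ t ∧ t ≤ hi) = Finset.Icc lo hi := by
  ext t
  simp only [Finset.mem_filter, Finset.mem_Icc]
  omega

private lemma filter_Icc_shrink {n lo hi : ℕ} (h1 : 1 ≤ lo) (h2 : hi ≤ n)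
    (C : ℕ → Prop) [DecidablePred C] :
    (Finset.Icc 1 n).filter (fun t => (lo ≤ t ∧ t ≤ hi) ∧ C t)
      = (Finset.Icc lo hi).filter C := by
  ext t
  simp only [Finset.mem_filter, Finset.mem_Icc]
  constructor
  · rintro ⟨-, ⟨h3, h4⟩, h5⟩
    exact ⟨⟨h3, h4⟩, h5⟩
  · rintro ⟨⟨h3, h4⟩, h5⟩
    exact ⟨⟨by omega, by omega⟩, ⟨h3, h4⟩, h5⟩
private lemma split_countL (s : Finset ℕ) (P Q R : ℕ → Prop) [DecidablePred P]
    [DecidablePred Q] [DecidablePred R] (h : ∀ t ∈ s, ¬(Q t ∧ R t)) :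
    (s.filter (fun t => (Q t ∨ R t) ∧ P t)).card
      = (s.filter (fun t => Q t ∧ P t)).card + (s.filter (fun t => R t ∧ P t)).card := by
  have hun : s.filter (fun t => (Q t ∨ R t) ∧ P t)
      = s.filter (fun t => Q t ∧ P t) ∪ s.filter (fun t => R t ∧ P t) := by
    ext t
    simp only [Finset.mem_filter, Finset.mem_union]
    tauto
  have hdisj : Disjoint (s.filter (fun t => Q t ∧ P t)) (s.filter (fun t => R t ∧ P t)) := by
    rw [Finset.disjoint_left]
    intro t ht1 ht2
    rw [Finset.mem_filter] at ht1 ht2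
    exact h t ht1.1 ⟨ht1.2.1, ht2.2.1⟩
  rw [hun, Finset.card_union_of_disjoint hdisj]

private lemma perIJ (α : ℝ) (hα : Irrational α) (q : ℕ) (hq : 3 ≤ q) (p : ℤ)
    (hcop : Int.gcd p q = 1) (hδ : |α - p / q| ≤ 1 / q ^ 2) {n : ℕ} (hn : 1 ≤ n)
    (σ : Equiv.Perm (ZMod n))
    (hσ : ∀ t ∈ Finset.Icc 1 n, σ ((t : ℕ) : ZMod n) = ((sos α n t : ℕ) : ZMod n))
    (a len a' len' : ℕ) (hlen : len ≤ n) (hlen' : len' ≤ n) :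
    discIn (((range len).image (fun i : ℕ => ((a + i : ℕ) : ZMod n))).image σ)
      ((range len').image (fun i : ℕ => ((a' + i : ℕ) : ZMod n)))
      ≤ 16 * (3 * ((n : ℝ) / q) + q + 1) := by
  classical
  set I := (range len).image (fun i : ℕ => ((a + i : ℕ) : ZMod n)) with hI
  set J := (range len').image (fun i : ℕ => ((a' + i : ℕ) : ZMod n)) with hJ
  obtain ⟨hb1, hb2, -⟩ := ivb_props hn a
  obtain ⟨hb1', hb2', -⟩ := ivb_props hn a'
  set b := ivb n a with hbd
  set b' := ivb n a' with hbd'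
  set B := min n (b + len - 1) with hB
  set B' := min n (b' + len' - 1) with hB'
  set e2 := b + len - (n+1) with he2
  set e2' := b' + len' - (n+1) with he2'
  have hBn : B ≤ n := min_le_left _ _
  have hBn' : B' ≤ n := min_le_left _ _
  have he2n : e2 ≤ n := by omega
  have he2n' : e2' ≤ n := by omega
  have hSimg : I.image σ ∩ J = (I.filter (fun x => σ x ∈ J)).image σ := by
    ext x
    simp only [Finset.mem_inter, Finset.mem_image, Finset.mem_filter]
    constructor
    · rintro ⟨⟨y, hy, rfl⟩, hxJ⟩
      exact ⟨y, ⟨hy, hxJ⟩, rfl⟩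
    · rintro ⟨y, ⟨hy, hyJ⟩, rfl⟩
      exact ⟨⟨y, hy, rfl⟩, hyJ⟩
  have hc1 : (I.image σ ∩ J).card
      = ((Finset.Icc 1 n).filter
          (fun t : ℕ => ((t : ℕ) : ZMod n) ∈ I ∧ ((sos α n t : ℕ) : ZMod n) ∈ J)).card := by
    rw [hSimg, Finset.card_image_of_injective _ σ.injective,
      card_eq_pi_count hn (I.filter (fun x => σ x ∈ J))]
    congr 1
    apply Finset.filter_congr
    intro t ht
    constructor
    · intro h
      obtain ⟨h1, h2⟩ := Finset.mem_filter.mp h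
      exact ⟨h1, by rwa [← hσ t ht]⟩
    · rintro ⟨h1, h2⟩
      exact Finset.mem_filter.mpr ⟨h1, by rwa [hσ t ht]⟩
  have hIpred : ∀ t ∈ Finset.Icc 1 n, (((t : ℕ) : ZMod n) ∈ I
      ↔ ((b ≤ t ∧ t ≤ B) ∨ (1 ≤ t ∧ t ≤ e2))) := by
    intro t ht
    obtain ⟨ht1, ht2⟩ := Finset.mem_Icc.mp ht
    rw [mem_interval_iff hn a len hlen ht1 ht2]
    constructor
    · rintro (h | h)
      · exact Or.inl h
      · exact Or.inr ⟨h.1, by omega⟩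
    · rintro (h | h)
      · exact Or.inl h
      · exact Or.inr ⟨h.1, by omega⟩
  have hJpred : ∀ s : ℕ, 1 ≤ s → s ≤ n → (((s : ℕ) : ZMod n) ∈ J
      ↔ ((b' ≤ s ∧ s ≤ B') ∨ (1 ≤ s ∧ s ≤ e2'))) := by
    intro s hs1 hs2
    rw [mem_interval_iff hn a' len' hlen' hs1 hs2]
    constructor
    · rintro (h | h)
      · exact Or.inl h
      · exact Or.inr ⟨h.1, by omega⟩
    · rintro (h | h)
      · exact Or.inl h
      · exact Or.inr ⟨h.1, by omega⟩
  have hcongr : ((Finset.Icc 1 n).filter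
        (fun t : ℕ => ((t : ℕ) : ZMod n) ∈ I ∧ ((sos α n t : ℕ) : ZMod n) ∈ J))
      = (Finset.Icc 1 n).filter (fun t : ℕ =>
          ((b ≤ t ∧ t ≤ B) ∨ (1 ≤ t ∧ t ≤ e2))
          ∧ ((b' ≤ sos α n t ∧ sos α n t ≤ B') ∨ (1 ≤ sos α n t ∧ sos α n t ≤ e2'))) := by
    apply Finset.filter_congr
    intro t ht
    rw [hIpred t ht, hJpred (sos α n t) (sos_pos α ht) (sos_le α)]
  have hQex : ∀ t ∈ Finset.Icc 1 n, ¬((b ≤ t ∧ t ≤ B) ∧ (1 ≤ t ∧ t ≤ e2)) := by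
    intro t _
    omega
  have hRex : ∀ s : ℕ, ¬((b' ≤ s ∧ s ≤ B') ∧ (1 ≤ s ∧ s ≤ e2')) := by
    intro s
    omega
  -- decompose the main count
  have hsplit1 := split_countL (Finset.Icc 1 n)
    (fun t => (b' ≤ sos α n t ∧ sos α n t ≤ B') ∨ (1 ≤ sos α n t ∧ sos α n t ≤ e2'))
    (fun t => b ≤ t ∧ t ≤ B) (fun t => 1 ≤ t ∧ t ≤ e2) hQex
  have hsplit2 := split_count2 (Finset.Icc 1 n) (fun t => b ≤ t ∧ t ≤ B)
    (fun t => b' ≤ sos α n t ∧ sos α n t ≤ B') (fun t => 1 ≤ sos α n t ∧ sos α n t ≤ e2')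
    (fun t _ => hRex (sos α n t))
  have hsplit3 := split_count2 (Finset.Icc 1 n) (fun t => 1 ≤ t ∧ t ≤ e2)
    (fun t => b' ≤ sos α n t ∧ sos α n t ≤ B') (fun t => 1 ≤ sos α n t ∧ sos α n t ≤ e2')
    (fun t _ => hRex (sos α n t))
  -- counts in MBp form
  have hN11 : ((Finset.Icc 1 n).filter (fun t => (b ≤ t ∧ t ≤ B)
      ∧ (b' ≤ sos α n t ∧ sos α n t ≤ B'))).card
      = ((Finset.Icc b B).filter (fun t => b' ≤ sos α n t ∧ sos α n t ≤ B')).card := by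
    rw [filter_Icc_shrink hb1 hBn]
  have hN12 : ((Finset.Icc 1 n).filter (fun t => (b ≤ t ∧ t ≤ B)
      ∧ (1 ≤ sos α n t ∧ sos α n t ≤ e2'))).card
      = ((Finset.Icc b B).filter (fun t => 1 ≤ sos α n t ∧ sos α n t ≤ e2')).card := by
    rw [filter_Icc_shrink hb1 hBn]
  have hN21 : ((Finset.Icc 1 n).filter (fun t => (1 ≤ t ∧ t ≤ e2)
      ∧ (b' ≤ sos α n t ∧ sos α n t ≤ B'))).card
      = ((Finset.Icc 1 e2).filter (fun t => b' ≤ sos α n t ∧ sos α n t ≤ B')).card := by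
    rw [filter_Icc_shrink (le_refl 1) he2n]
  have hN22 : ((Finset.Icc 1 n).filter (fun t => (1 ≤ t ∧ t ≤ e2)
      ∧ (1 ≤ sos α n t ∧ sos α n t ≤ e2'))).card
      = ((Finset.Icc 1 e2).filter (fun t => 1 ≤ sos α n t ∧ sos α n t ≤ e2')).card := by
    rw [filter_Icc_shrink (le_refl 1) he2n]
  -- cards of I and J
  have hcardI : I.card = (Finset.Icc b B).card + (Finset.Icc 1 e2).card := by
    rw [card_eq_pi_count hn I, Finset.filter_congr hIpred,
      split_count1 (Finset.Icc 1 n) _ _ hQex, filter_Icc_eq hb1 hBn,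
      filter_Icc_eq (le_refl 1) he2n]
  have hcardJ : J.card = (Finset.Icc b' B').card + (Finset.Icc 1 e2').card := by
    have hJpred' : ∀ s ∈ Finset.Icc 1 n, (((s : ℕ) : ZMod n) ∈ J
        ↔ ((b' ≤ s ∧ s ≤ B') ∨ (1 ≤ s ∧ s ≤ e2'))) := by
      intro s hs
      obtain ⟨hs1, hs2⟩ := Finset.mem_Icc.mp hs
      exact hJpred s hs1 hs2
    rw [card_eq_pi_count hn J, Finset.filter_congr hJpred',
      split_count1 (Finset.Icc 1 n) _ _ (fun s _ => hRex s), filter_Icc_eq hb1' hBn',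
      filter_Icc_eq (le_refl 1) he2n']
  -- the four MBp bounds
  have M11 := MBp α hα q hq p hcop hδ hn b B b' B' hb1 (by omega) hBn hb1' (by omega) hBn'
  have M12 := MBp α hα q hq p hcop hδ hn b B 1 e2' hb1 (by omega) hBn (le_refl 1) (by omega) he2n'
  have M21 := MBp α hα q hq p hcop hδ hn 1 e2 b' B' (le_refl 1) (by omega) he2n hb1' (by omega) hBn'
  have M22 := MBp α hα q hq p hcop hδ hn 1 e2 1 e2' (le_refl 1) (by omega) he2n (le_refl 1) (by omega) he2n'
  -- assemble
  rw [discIn]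
  rw [Finset.card_image_of_injective _ σ.injective]
  rw [hc1, hcongr, hsplit1, hsplit2, hsplit3, hN11, hN12, hN21, hN22, hcardI, hcardJ]
  set E := 3 * ((n : ℝ) / q) + q + 1 with hE
  set N11 := ((Finset.Icc b B).filter (fun t => b' ≤ sos α n t ∧ sos α n t ≤ B')).card with hN11d
  set N12 := ((Finset.Icc b B).filter (fun t => 1 ≤ sos α n t ∧ sos α n t ≤ e2')).card with hN12d
  set N21 := ((Finset.Icc 1 e2).filter (fun t => b' ≤ sos α n t ∧ sos α n t ≤ B')).card with hN21d
  set N22 := ((Finset.Icc 1 e2).filter (fun t => 1 ≤ sos α n t ∧ sos α n t ≤ e2')).card with hN22d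
  set L1 := (Finset.Icc b B).card
  set L2 := (Finset.Icc 1 e2).card
  set d1 := (Finset.Icc b' B').card
  set d2 := (Finset.Icc 1 e2').card
  have hprod : ((L1 + L2 : ℕ) : ℝ) * ((d1 + d2 : ℕ) : ℝ) / n
      = (L1 : ℝ) * d1 / n + (L1 : ℝ) * d2 / n + (L2 : ℝ) * d1 / n + (L2 : ℝ) * d2 / n := by
    push_cast
    ring
  have hsumcast : ((N11 + N12 + (N21 + N22) : ℕ) : ℝ)
      = (N11 : ℝ) + N12 + N21 + N22 := by push_cast; ring
  rw [hsumcast, hprod]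
  rw [abs_le] at M11 M12 M21 M22 ⊢
  constructor <;> linarith
private lemma exists_big_den (α : ℝ) (hα : Irrational α) (C : ℕ) :
    ∃ r : ℚ, C ≤ r.den ∧ |α - (r : ℝ)| < 1 / (r.den : ℝ)^2 := by
  by_contra hcon
  push_neg at hcon
  have hinf := Real.infinite_rat_abs_sub_lt_one_div_den_sq_of_irrational hα
  apply hinf
  set M : ℤ := ⌈(|α| + 1) * C⌉ with hM
  apply Set.Finite.subset (Set.Finite.image (fun p : ℤ × ℕ => ((p.1 : ℚ) / (p.2 : ℚ)))
    ((Set.finite_Icc (-M) M).prod (Set.finite_Icc 1 C)))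
  intro r hr
  simp only [Set.mem_setOf_eq] at hr
  have hden : r.den < C := by
    by_contra hge
    push_neg at hge
    exact absurd hr (not_lt.mpr (hcon r hge))
  have hd1 : 1 ≤ r.den := r.pos
  have hd1R : (1:ℝ) ≤ (r.den : ℝ) := by exact_mod_cast hd1
  have hfrac : (1:ℝ) / (r.den : ℝ)^2 ≤ 1 := by
    rw [div_le_one (by positivity)]
    nlinarith
  have habs : |(r:ℝ)| ≤ |α| + 1 := by
    have h1 := abs_sub_abs_le_abs_sub (r:ℝ) α
    rw [abs_sub_comm] at h1
    linarith
  have hnum : |(r.num : ℝ)| ≤ (M : ℝ) := by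
    have hcast : (r:ℝ) = (r.num : ℝ) / (r.den : ℝ) := by
      rw [Rat.cast_def]
    have h2 : |(r.num : ℝ)| = |(r:ℝ)| * (r.den : ℝ) := by
      rw [hcast, abs_div, abs_of_nonneg (by positivity : (0:ℝ) ≤ (r.den:ℝ))]
      field_simp
    rw [h2]
    have h3 : |(r:ℝ)| * (r.den : ℝ) ≤ (|α| + 1) * C := by
      apply mul_le_mul habs ?_ (by positivity) (by positivity)
      exact_mod_cast hden.le
    exact le_trans h3 (Int.le_ceil _)
  have hnumZ : -M ≤ r.num ∧ r.num ≤ M := by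
    have : |r.num| ≤ M := by exact_mod_cast (by push_cast; exact hnum : ((|r.num| : ℤ) : ℝ) ≤ (M:ℝ))
    constructor <;> [linarith [neg_abs_le r.num]; linarith [le_abs_self r.num]]
  refine ⟨(r.num, r.den), ⟨?_, ?_⟩, ?_⟩
  · exact Set.mem_Icc.mpr hnumZ
  · exact Set.mem_Icc.mpr ⟨hd1, hden.le⟩
  · exact Rat.num_div_den r
/-- For irrational `α`, the Sós permutations `β_α` are quasirandom: `D(β_α) = o(n)`.
Here `β_α` is regarded as a permutation of `ZMod n` via the identification `t ↦ t mod n`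
of `[n] = {1,…,n}` with `ZMod n`. -/
theorem stmt_13 (α : ℝ) (hα : Irrational α) :
    ∀ ε : ℝ, 0 < ε → ∃ N : ℕ, ∀ n : ℕ, N ≤ n →
      ∀ σ : Equiv.Perm (ZMod n),
        (∀ t ∈ Finset.Icc 1 n, σ ((t : ℕ) : ZMod n) = ((sos α n t : ℕ) : ZMod n)) →
        disc σ ≤ ε * n := by
  intro ε hε
  obtain ⟨r, hrden, hrdiff⟩ := exists_big_den α hα (max 3 ⌈96 / ε⌉₊)
  set q : ℕ := r.den with hqdef
  set p : ℤ := r.num with hpdef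
  have hq3 : 3 ≤ q := le_trans (le_max_left _ _) hrden
  have hq0 : (0:ℝ) < q := by positivity
  have hqε : 96 / ε ≤ (q:ℝ) := by
    have h1 : (⌈96 / ε⌉₊ : ℝ) ≤ q := by exact_mod_cast le_trans (le_max_right _ _) hrden
    exact le_trans (Nat.le_ceil _) h1
  have hδ : |α - (p:ℝ)/q| ≤ 1/(q:ℝ)^2 := by
    have : (r:ℝ) = (p:ℝ)/q := by rw [Rat.cast_def]
    rw [← this]
    exact hrdiff.le
  have hcop : Int.gcd p q = 1 := r.reduced
  refine ⟨max 1 ⌈32 * ((q:ℝ) + 1) / ε⌉₊, ?_⟩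
  intro n hn σ hσ
  have hn1 : 1 ≤ n := le_trans (le_max_left _ _) hn
  have hn0 : (0:ℝ) < n := by exact_mod_cast hn1
  have hnN : 32 * ((q:ℝ) + 1) / ε ≤ (n:ℝ) := by
    have h1 : (⌈32 * ((q:ℝ) + 1) / ε⌉₊ : ℝ) ≤ n := by
      exact_mod_cast le_trans (le_max_right _ _) hn
    exact le_trans (Nat.le_ceil _) h1
  rw [disc]
  apply Real.sSup_le
  · rintro d ⟨I, J, ⟨a, len, rfl⟩, ⟨a', len', rfl⟩, rfl⟩
    have hclamp : ∀ (aa ll : ℕ),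
        (Finset.range ll).image (fun i : ℕ => ((aa + i : ℕ) : ZMod n))
          = (Finset.range (min ll n)).image (fun i : ℕ => ((aa + i : ℕ) : ZMod n)) := by
      intro aa ll
      rcases le_total ll n with h | h
      · rw [min_eq_left h]
      · rw [min_eq_right h, interval_clamp hn1 aa ll h]
    rw [hclamp a len, hclamp a' len']
    refine le_trans (perIJ α hα q hq3 p hcop hδ hn1 σ hσ a (min len n) a' (min len' n)
      (min_le_right _ _) (min_le_right _ _)) ?_
    -- 16 E ≤ ε n
    have h96 : 96 ≤ ε * q := by
      have := mul_le_mul_of_nonneg_left hqε hε.le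
      rwa [mul_div_cancel₀ _ (ne_of_gt hε)] at this
    have h48 : 48 * ((n:ℝ)/q) ≤ ε * n / 2 := by
      have hdiv : (n:ℝ)/q ≤ (ε/96) * n := by
        rw [div_le_iff₀ hq0]
        nlinarith [mul_nonneg hn0.le (sub_nonneg.mpr h96)]
      nlinarith [hdiv]
    have h16 : 16 * ((q:ℝ) + 1) ≤ ε * n / 2 := by
      have := mul_le_mul_of_nonneg_left hnN hε.le
      rw [mul_div_cancel₀ _ (ne_of_gt hε)] at this
      linarith
    calc 16 * (3 * ((n:ℝ)/q) + q + 1) = 48 * ((n:ℝ)/q) + 16 * ((q:ℝ) + 1) := by ring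
      _ ≤ ε * n / 2 + ε * n / 2 := add_le_add h48 h16
      _ = ε * n := by ring
  · exact mul_nonneg hε.le hn0.le
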